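/- (Key algebraic identity in the stochastic equation of motion) With 𝒱^μ := iλ²∂^μ ln φ + (e/m₀)A^μ, 𝒱̂^μ := 𝒱^μ + (iλ²/2)∂^μ, 𝔇_τ := 𝒱̂^ν∂_ν, and F^{μν} := ∂^μA^ν − ∂^νA^μ, one has the operator identity (valid pointwise where φ ≠ 0, with φ ∈ C³, A ∈ C²): 𝔇_τ 𝒱^μ + (e/m₀) 𝒱̂_ν F^{μν} = 𝒱̂_ν ∂^μ 𝒱^ν. -/

import Mathlib

open Complex

noncomputable section

/-- Spacetime `ℝ⁴`. -/
abbrev Spt := Fin 4 → ℝ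

/-- Components of the Minkowski metric `diag(+1,-1,-1,-1)`. -/
def η (μ : Fin 4) : ℝ := if μ = 0 then 1 else -1

def pdC (μ : Fin 4) (f : Spt → ℂ) (x : Spt) : ℂ := fderiv ℝ f x (Pi.single μ 1)

def pdR (μ : Fin 4) (f : Spt → ℝ) (x : Spt) : ℝ := fderiv ℝ f x (Pi.single μ 1)

/-- The d'Alembertian `∂^μ∂_μ f`. -/
def boxC (f : Spt → ℂ) (x : Spt) : ℂ :=
  ∑ μ : Fin 4, (η μ : ℂ) * pdC μ (fun y => pdC μ f y) x

/-- The raised complex velocity `𝒱^μ = iλ²∂^μ ln φ + (e/m₀)A^μ`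
(here `A μ` are the lowered components `A_μ`, so `A^μ = η^{μμ}A_μ`). -/
def cVelUp (lam e m₀ : ℝ) (A : Fin 4 → Spt → ℝ) (φ : Spt → ℂ) (μ : Fin 4) (x : Spt) : ℂ :=
  I * (lam : ℂ) ^ 2 * ((η μ : ℂ) * pdC μ φ x) / φ x + ((e / m₀ : ℝ) : ℂ) * ((η μ : ℝ) * A μ x)

/-- `𝔇_τ = 𝒱̂^μ∂_μ = 𝒱^μ∂_μ + (iλ²/2)∂^μ∂_μ`. -/
def Dtau (lam e m₀ : ℝ) (A : Fin 4 → Spt → ℝ) (φ : Spt → ℂ) (f : Spt → ℂ) (x : Spt) : ℂ :=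
  (∑ ν : Fin 4, cVelUp lam e m₀ A φ ν x * pdC ν f x)
    + I * (lam : ℂ) ^ 2 / 2 * boxC f x

/-- The contraction `𝒱̂_ν X^ν = 𝒱_ν X^ν + (iλ²/2)∂_ν X^ν`, for `X` given by its raised
components. -/
def hatContr (lam e m₀ : ℝ) (A : Fin 4 → Spt → ℝ) (φ : Spt → ℂ)
    (X : Fin 4 → Spt → ℂ) (x : Spt) : ℂ :=
  ∑ ν : Fin 4, ((η ν : ℂ) * cVelUp lam e m₀ A φ ν x * X ν x
    + I * (lam : ℂ) ^ 2 / 2 * pdC ν (X ν) x)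

/-- The raised field strength `F^{μν} = ∂^μA^ν − ∂^νA^μ`. -/
def FupL (A : Fin 4 → Spt → ℝ) (μ ν : Fin 4) (x : Spt) : ℝ :=
  η μ * η ν * (pdR μ (A ν) x - pdR ν (A μ) x)

/-- `iħ∂_μ f + e A_μ f`. -/
def Pop (hbar e : ℝ) (A : Fin 4 → Spt → ℝ) (μ : Fin 4) (f : Spt → ℂ) (x : Spt) : ℂ :=
  I * (hbar : ℂ) * pdC μ f x + (e : ℂ) * (A μ x) * f x

/-- The Klein-Gordon operator `(iħ∂_ν + eA_ν)(iħ∂^ν + eA^ν)φ`. -/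
def KGop (hbar e : ℝ) (A : Fin 4 → Spt → ℝ) (φ : Spt → ℂ) (x : Spt) : ℂ :=
  ∑ ν : Fin 4, (η ν : ℂ) * Pop hbar e A ν (fun y => Pop hbar e A ν φ y) x

/-!
On `φ ≠ 0` the velocity is `𝒱^μ = iλ² ∂^μ ln φ + (e/m₀) A^μ`, whose first part is a gradient.
Symmetry of second derivatives therefore gives `∂^μ𝒱^ν = ∂^ν𝒱^μ + (e/m₀) F^{μν}` on a
neighbourhood of the point. Contracting with `𝒱̂_ν`, which involves one more derivative and so
only sees the germ of the integrand, and using `𝒱̂_ν ∂^ν = 𝔇_τ` yields the identity.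
-/

open Filter Topology

lemma η_mul_self (ν : Fin 4) : η ν * η ν = 1 := by
  unfold η; split_ifs <;> norm_num

section PartialDerivatives

variable {f g : Spt → ℂ} {x : Spt}

lemma pdC_congr_of_eventuallyEq (h : f =ᶠ[𝓝 x] g) (μ : Fin 4) : pdC μ f x = pdC μ g x := by
  rw [pdC, pdC, h.fderiv_eq]

lemma pdC_const_mul (c : ℂ) (f : Spt → ℂ) (μ : Fin 4) (x : Spt) :
    pdC μ (fun y => c * f y) x = c * pdC μ f x := by
  have : (fun y => c * f y) = c • f := rfl
  simp [pdC, this, fderiv_const_smul_field]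

lemma pdC_add (hf : DifferentiableAt ℝ f x) (hg : DifferentiableAt ℝ g x) (μ : Fin 4) :
    pdC μ (fun y => f y + g y) x = pdC μ f x + pdC μ g x := by
  simp [pdC, fderiv_fun_add hf hg]

lemma pdC_div (hf : DifferentiableAt ℝ f x) (hg : DifferentiableAt ℝ g x) (hx : g x ≠ 0)
    (μ : Fin 4) :
    pdC μ (fun y => f y / g y) x = (pdC μ f x * g x - f x * pdC μ g x) / g x ^ 2 := by
  have hinv : HasFDerivAt (fun y => (g y)⁻¹)
      ((-ContinuousLinearMap.mulLeftRight ℝ ℂ (g x)⁻¹ (g x)⁻¹).comp (fderiv ℝ g x)) x :=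
    (hasFDerivAt_inv' hx).comp x hg.hasFDerivAt
  simp only [pdC, div_eq_mul_inv, fderiv_fun_mul hf hinv.differentiableAt, hinv.fderiv,
    add_apply, smul_apply, smul_eq_mul, ContinuousLinearMap.comp_apply, neg_apply,
    ContinuousLinearMap.mulLeftRight_apply]
  field_simp
  ring

lemma pdC_ofReal {f : Spt → ℝ} (hf : DifferentiableAt ℝ f x) (μ : Fin 4) :
    pdC μ (fun y => (f y : ℂ)) x = pdR μ f x := by
  have : HasFDerivAt (fun y => (f y : ℂ)) (ofRealCLM.comp (fderiv ℝ f x)) x :=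
    ofRealCLM.hasFDerivAt.comp x hf.hasFDerivAt
  simp [pdC, pdR, this.fderiv]

lemma differentiableAt_pdC (hf : ContDiffAt ℝ 2 f x) (μ : Fin 4) :
    DifferentiableAt ℝ (fun y => pdC μ f y) x :=
  ((hf.fderiv_right (m := 1) (by norm_num)).clm_apply contDiffAt_const).differentiableAt
    one_ne_zero

lemma contDiff_pdC {n : ℕ} (hf : ContDiff ℝ (n + 1) f) (μ : Fin 4) :
    ContDiff ℝ n (fun y => pdC μ f y) :=
  (hf.fderiv_right le_rfl).clm_apply contDiff_const

lemma contDiff_pdR {n : ℕ} {f : Spt → ℝ} (hf : ContDiff ℝ (n + 1) f) (μ : Fin 4) :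
    ContDiff ℝ n (fun y => pdR μ f y) :=
  (hf.fderiv_right le_rfl).clm_apply contDiff_const

lemma pdC_comm (hf : ContDiffAt ℝ 2 f x) (μ ν : Fin 4) :
    pdC μ (fun y => pdC ν f y) x = pdC ν (fun y => pdC μ f y) x := by
  have hsnd : ∀ v w : Spt, fderiv ℝ (fun y => fderiv ℝ f y w) x v
      = fderiv ℝ (fderiv ℝ f) x v w := fun v w => by
    rw [fderiv_clm_apply ((hf.fderiv_right (m := 1) le_rfl).differentiableAt one_ne_zero)
      (differentiableAt_const w)]
    simp
  simp only [pdC, hsnd]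
  exact hf.isSymmSndFDerivAt (by simp) _ _

lemma pdC_logDeriv_comm (hf : ContDiffAt ℝ 2 f x) (hx : f x ≠ 0) (μ ν : Fin 4) :
    pdC μ (fun y => pdC ν f y / f y) x = pdC ν (fun y => pdC μ f y / f y) x := by
  have hd : DifferentiableAt ℝ f x := hf.differentiableAt (by norm_num)
  rw [pdC_div (differentiableAt_pdC hf ν) hd hx, pdC_div (differentiableAt_pdC hf μ) hd hx,
    pdC_comm hf]
  ring

end PartialDerivatives

lemma contDiff_FupL {n : ℕ} {A : Fin 4 → Spt → ℝ} {μ ν : Fin 4} (hAμ : ContDiff ℝ (n + 1) (A μ))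
    (hAν : ContDiff ℝ (n + 1) (A ν)) : ContDiff ℝ n (fun y => (FupL A μ ν y : ℂ)) :=
  ofRealCLM.contDiff.comp (contDiff_const.mul ((contDiff_pdR hAν μ).sub (contDiff_pdR hAμ ν)))

section ComplexVelocity

variable (lam e m₀ : ℝ) (A : Fin 4 → Spt → ℝ) (φ : Spt → ℂ)

lemma cVelUp_eq (ν : Fin 4) :
    cVelUp lam e m₀ A φ ν = fun y =>
      I * (lam : ℂ) ^ 2 * (η ν : ℂ) * (pdC ν φ y / φ y)
        + ((e / m₀ * η ν : ℝ) : ℂ) * (A ν y : ℂ) := by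
  funext y
  simp only [cVelUp]
  push_cast
  ring

variable {lam e m₀ A φ}

lemma contDiffAt_cVelUp {x : Spt} (hφ : ContDiff ℝ 3 φ) {ν : Fin 4} (hA : ContDiff ℝ 2 (A ν))
    (hx : φ x ≠ 0) : ContDiffAt ℝ 2 (cVelUp lam e m₀ A φ ν) x := by
  rw [cVelUp_eq]
  refine (contDiffAt_const.mul ?_).add (contDiffAt_const.mul ?_)
  · exact (contDiff_pdC hφ ν).contDiffAt.mul ((hφ.of_le (by norm_num)).contDiffAt.inv hx)
  · exact (ofRealCLM.contDiff.comp hA).contDiffAt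

lemma pdC_cVelUp {x : Spt} (hφ : ContDiffAt ℝ 2 φ x) (hx : φ x ≠ 0) {ν : Fin 4}
    (hA : DifferentiableAt ℝ (A ν) x) (μ : Fin 4) :
    pdC μ (cVelUp lam e m₀ A φ ν) x =
      I * (lam : ℂ) ^ 2 * (η ν : ℂ) * pdC μ (fun y => pdC ν φ y / φ y) x
        + ((e / m₀ * η ν : ℝ) : ℂ) * (pdR μ (A ν) x : ℂ) := by
  have hlog : DifferentiableAt ℝ (fun y => pdC ν φ y / φ y) x :=
    (differentiableAt_pdC hφ ν).mul ((hφ.differentiableAt (by norm_num)).inv hx)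
  have hAC : DifferentiableAt ℝ (fun y => (A ν y : ℂ)) x :=
    ofRealCLM.differentiableAt.comp x hA
  rw [cVelUp_eq, pdC_add (hlog.const_mul _) (hAC.const_mul _), pdC_const_mul, pdC_const_mul,
    pdC_ofReal hA]

/-- Since `𝒱 - (e/m₀)A` is a gradient, only the field strength survives in the curl of `𝒱`. -/
lemma raised_pdC_cVelUp_swap {x : Spt} (hφ : ContDiffAt ℝ 2 φ x) (hx : φ x ≠ 0) {μ ν : Fin 4}
    (hAμ : DifferentiableAt ℝ (A μ) x) (hAν : DifferentiableAt ℝ (A ν) x) :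
    (η μ : ℂ) * pdC μ (cVelUp lam e m₀ A φ ν) x =
      (η ν : ℂ) * pdC ν (cVelUp lam e m₀ A φ μ) x + ((e / m₀ : ℝ) : ℂ) * (FupL A μ ν x : ℂ) := by
  rw [pdC_cVelUp hφ hx hAν, pdC_cVelUp hφ hx hAμ, pdC_logDeriv_comm hφ hx μ ν, FupL]
  push_cast
  ring

end ComplexVelocity

section HatContraction

variable {lam e m₀ : ℝ} {A : Fin 4 → Spt → ℝ} {φ : Spt → ℂ} {X Y : Fin 4 → Spt → ℂ} {x : Spt}

lemma hatContr_congr_of_eventuallyEq (h : ∀ ν, X ν =ᶠ[𝓝 x] Y ν) :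
    hatContr lam e m₀ A φ X x = hatContr lam e m₀ A φ Y x := by
  simp only [hatContr, pdC_congr_of_eventuallyEq (h _), (h _).eq_of_nhds]

lemma hatContr_add_const_mul (hX : ∀ ν, DifferentiableAt ℝ (X ν) x)
    (hY : ∀ ν, DifferentiableAt ℝ (Y ν) x) (c : ℂ) :
    hatContr lam e m₀ A φ (fun ν y => X ν y + c * Y ν y) x =
      hatContr lam e m₀ A φ X x + c * hatContr lam e m₀ A φ Y x := by
  simp only [hatContr, pdC_add (hX _) ((hY _).const_mul c), pdC_const_mul, Finset.mul_sum,
    ← Finset.sum_add_distrib]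
  exact Finset.sum_congr rfl fun ν _ => by ring

/-- `𝒱̂_ν ∂^ν = 𝔇_τ`, using `η_νν η^νν = 1`. -/
lemma hatContr_raised_pdC (f : Spt → ℂ) :
    hatContr lam e m₀ A φ (fun ν y => (η ν : ℂ) * pdC ν f y) x = Dtau lam e m₀ A φ f x := by
  have hη : ∀ ν, (η ν : ℂ) * η ν = 1 := fun ν => by exact_mod_cast η_mul_self ν
  simp only [hatContr, Dtau, boxC, pdC_const_mul, Finset.sum_add_distrib, Finset.mul_sum]
  congr 1
  refine Finset.sum_congr rfl fun ν _ => ?_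
  linear_combination cVelUp lam e m₀ A φ ν x * pdC ν f x * hη ν

end HatContraction

theorem key_identity_stochastic_eom_general
    (lam e m₀ : ℝ)
    (φ : Spt → ℂ) (hφ : ContDiff ℝ 3 φ)
    (A : Fin 4 → Spt → ℝ) (hA : ∀ μ, ContDiff ℝ 2 (A μ)) :
    ∀ (μ : Fin 4) (x : Spt), φ x ≠ 0 →
      Dtau lam e m₀ A φ (cVelUp lam e m₀ A φ μ) x
        + ((e / m₀ : ℝ) : ℂ) *
            hatContr lam e m₀ A φ (fun ν y => ((FupL A μ ν y : ℝ) : ℂ)) x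
      = hatContr lam e m₀ A φ
          (fun ν y => (η μ : ℂ) * pdC μ (cVelUp lam e m₀ A φ ν) y) x := by
  intro μ x hx
  have hA' : ∀ ν y, DifferentiableAt ℝ (A ν) y := fun ν => (hA ν).differentiable (by norm_num)
  have hcurl : ∀ ν, (fun y => (η μ : ℂ) * pdC μ (cVelUp lam e m₀ A φ ν) y) =ᶠ[𝓝 x]
      fun y => (η ν : ℂ) * pdC ν (cVelUp lam e m₀ A φ μ) y
        + ((e / m₀ : ℝ) : ℂ) * (FupL A μ ν y : ℂ) := fun ν =>
    (hφ.continuous.continuousAt.eventually_ne hx).mono fun y hy =>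
      raised_pdC_cVelUp_swap (hφ.of_le (by norm_num)).contDiffAt hy (hA' μ y) (hA' ν y)
  have hdV : ∀ ν, DifferentiableAt ℝ (fun y => (η ν : ℂ) * pdC ν (cVelUp lam e m₀ A φ μ) y) x :=
    fun ν => (differentiableAt_pdC (contDiffAt_cVelUp hφ (hA μ) hx) ν).const_mul _
  have hdF : ∀ ν, DifferentiableAt ℝ (fun y => (FupL A μ ν y : ℂ)) x := fun ν =>
    (contDiff_FupL (n := 1) (hA μ) (hA ν)).differentiable one_ne_zero x
  rw [hatContr_congr_of_eventuallyEq hcurl, hatContr_add_const_mul hdV hdF,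
    hatContr_raised_pdC]

/-- **Key algebraic identity of the stochastic equation of motion**:
`𝔇_τ𝒱^μ + (e/m₀)𝒱̂_νF^{μν} = 𝒱̂_ν∂^μ𝒱^ν` wherever `φ ≠ 0`. -/
theorem key_identity_stochastic_eom
    (lam e m₀ : ℝ) (hlam : 0 < lam) (he : 0 < e) (hm : 0 < m₀)
    (φ : Spt → ℂ) (hφ : ContDiff ℝ 3 φ)
    (A : Fin 4 → Spt → ℝ) (hA : ∀ μ, ContDiff ℝ 2 (A μ)) :
    ∀ (μ : Fin 4) (x : Spt), φ x ≠ 0 →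
      Dtau lam e m₀ A φ (cVelUp lam e m₀ A φ μ) x
        + ((e / m₀ : ℝ) : ℂ) *
            hatContr lam e m₀ A φ (fun ν y => ((FupL A μ ν y : ℝ) : ℂ)) x
      = hatContr lam e m₀ A φ
          (fun ν y => (η μ : ℂ) * pdC μ (cVelUp lam e m₀ A φ ν) y) x :=
  key_identity_stochastic_eom_general lam e m₀ φ hφ A hA
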